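/- arXiv:1810.09622 — 8 statements merged into one kernel-verified Lean document; each statement's English description precedes it below -/
import Mathlib

section
/- Fix n, indices i < j in Fin n, a diagonal real n×n matrix Λ, and an orthogonal matrix w ∈ O(n) such that wΛwᵀ is again diagonal. Let A = E_{ij} − E_{ji} and define the curve γ : ℝ → Matrix n n ℝ by γ(t) = exp(tA)·w. Then there exists a function k : ℝ → ℝ such that for every t ∈ ℝ the Toda vector field at γ(t) is proportional to the velocity of γ: M(γ(t)·Λ·γ(t)ᵀ)·γ(t) = k(t) • (deriv γ)(t), where deriv γ is the (entrywise) derivative of γ. In other words, the path γ_{w,α}(t) = exp(t(e_α − e_{−α}))·w is tangent to the Toda vector field T^Λ on the compact group K = O(n). -/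
open Matrix

/-- Matrix exponential, defined by the usual power series. -/
noncomputable def mexp {n : ℕ} (A : Matrix (Fin n) (Fin n) ℝ) : Matrix (Fin n) (Fin n) ℝ :=
  ∑' k : ℕ, (k.factorial : ℝ)⁻¹ • A ^ k

/-- The Toda projector: `M(L)_{ab} = L_{ab}` for `a < b`, `-L_{ab}` for `a > b`, `0` on
the diagonal. -/
def todaM {n : ℕ} (L : Matrix (Fin n) (Fin n) ℝ) : Matrix (Fin n) (Fin n) ℝ :=
  Matrix.of fun a b => if a < b then L a b else if b < a then -L a b else 0

/-- Entrywise derivative of a matrix-valued curve. -/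
noncomputable def matDeriv {n : ℕ} (γ : ℝ → Matrix (Fin n) (Fin n) ℝ) (t : ℝ) :
    Matrix (Fin n) (Fin n) ℝ :=
  Matrix.of fun a b => deriv (fun s => γ s a b) t

private lemma mexp_apply {n : ℕ} {B : Matrix (Fin n) (Fin n) ℝ}
    (hs : Summable (fun k : ℕ => (k.factorial : ℝ)⁻¹ • B ^ k)) (a b : Fin n) :
    mexp B a b = ∑' k : ℕ, (k.factorial : ℝ)⁻¹ * ((B ^ k) a b) := by
  rw [mexp]
  have e1 : (∑' k : ℕ, (k.factorial : ℝ)⁻¹ • B ^ k) a = ∑' k : ℕ, ((k.factorial : ℝ)⁻¹ • B ^ k) a :=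
    tsum_apply hs
  rw [e1, tsum_apply (Pi.summable.mp hs a)]
  simp [Matrix.smul_apply, smul_eq_mul]

private lemma mexp_eq_exp {n : ℕ} (B : Matrix (Fin n) (Fin n) ℝ) :
    mexp B = NormedSpace.exp B := by
  rw [NormedSpace.exp_eq_tsum ℝ]; rfl

private lemma pow_row_zero {n : ℕ} {B : Matrix (Fin n) (Fin n) ℝ} {a : Fin n}
    (h : ∀ x, B a x = 0) : ∀ k : ℕ, k ≠ 0 → ∀ b, (B ^ k) a b = 0 := by
  intro k hk b
  obtain ⟨m, rfl⟩ := Nat.exists_eq_succ_of_ne_zero hk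
  rw [pow_succ', Matrix.mul_apply]
  simp [h]

private lemma pow_col_zero {n : ℕ} {B : Matrix (Fin n) (Fin n) ℝ} {b : Fin n}
    (h : ∀ x, B x b = 0) : ∀ k : ℕ, k ≠ 0 → ∀ a, (B ^ k) a b = 0 := by
  intro k hk a
  obtain ⟨m, rfl⟩ := Nat.exists_eq_succ_of_ne_zero hk
  rw [pow_succ, Matrix.mul_apply]
  simp [h]

private lemma mexp_entry_eq_one {n : ℕ} {B : Matrix (Fin n) (Fin n) ℝ}
    (hs : Summable (fun k : ℕ => (k.factorial : ℝ)⁻¹ • B ^ k))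
    {a b : Fin n} (h : ∀ k : ℕ, k ≠ 0 → (B ^ k) a b = 0) :
    mexp B a b = (1 : Matrix (Fin n) (Fin n) ℝ) a b := by
  rw [mexp_apply hs]
  rw [tsum_eq_single 0 (fun k hk => by simp [h k hk])]
  simp

/-- The curve `γ(t) = exp(t(E_{ij} - E_{ji})) · w` through `w ∈ O(n)` is tangent to the
Toda vector field `T^Λ` on `O(n)`: the Toda field at `γ(t)` is proportional to the
velocity of `γ`. -/
theorem toda_field_tangent_to_curve {n : ℕ} (i j : Fin n) (hij : i < j)
    (Λ : Matrix (Fin n) (Fin n) ℝ) (hΛ : Λ.IsDiag)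
    (w : Matrix (Fin n) (Fin n) ℝ) (hw : w * wᵀ = 1)
    (hwΛ : (w * Λ * wᵀ).IsDiag)
    (A : Matrix (Fin n) (Fin n) ℝ)
    (hA : A = Matrix.single i j (1 : ℝ) - Matrix.single j i (1 : ℝ))
    (γ : ℝ → Matrix (Fin n) (Fin n) ℝ) (hγ : ∀ t, γ t = mexp (t • A) * w) :
    ∃ k : ℝ → ℝ, ∀ t : ℝ,
      todaM (γ t * Λ * (γ t)ᵀ) * γ t = k t • matDeriv γ t := by
  classical
  letI : NormedRing (Matrix (Fin n) (Fin n) ℝ) := Matrix.linftyOpNormedRing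
  letI : NormedAlgebra ℝ (Matrix (Fin n) (Fin n) ℝ) := Matrix.linftyOpNormedAlgebra
  have hij' : i ≠ j := ne_of_lt hij
  -- rows/columns of A outside {i,j} vanish
  have hArow : ∀ a : Fin n, a ≠ i → a ≠ j → ∀ x, A a x = 0 := by
    intro a hai haj x
    simp [hA, Matrix.sub_apply, Matrix.single, (Ne.symm hai), (Ne.symm haj)]
  have hAcol : ∀ b : Fin n, b ≠ i → b ≠ j → ∀ x, A x b = 0 := by
    intro b hbi hbj x
    simp [hA, Matrix.sub_apply, Matrix.single, (Ne.symm hbi), (Ne.symm hbj)]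
  -- the entry continuous linear maps
  have hbound : ∀ (X : Matrix (Fin n) (Fin n) ℝ) (a b : Fin n), ‖X a b‖ ≤ 1 * ‖X‖ := by
    intro X a b
    rw [one_mul]
    have h1 : ‖X a b‖₊ ≤ ∑ y, ‖X a y‖₊ :=
      Finset.single_le_sum (f := fun y => ‖X a y‖₊) (fun _ _ => zero_le) (Finset.mem_univ b)
    have h2 : (∑ y, ‖X a y‖₊) ≤ ‖X‖₊ := by
      rw [Matrix.linfty_opNNNorm_def]
      exact Finset.le_sup (f := fun i => ∑ y, ‖X i y‖₊) (Finset.mem_univ a)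
    exact_mod_cast h1.trans h2
  set E : Fin n → Fin n → (Matrix (Fin n) (Fin n) ℝ →L[ℝ] ℝ) := fun a b =>
    LinearMap.mkContinuous (Matrix.entryLinearMap ℝ ℝ a b) 1 (fun X => hbound X a b) with hE
  set D := w * Λ * wᵀ with hDdef
  set d : Fin n → ℝ := D.diag with hd
  have hDdiag : Matrix.diagonal d = D := hwΛ.diagonal_diag
  refine ⟨fun t => (γ t * Λ * (γ t)ᵀ) i j, fun t => ?_⟩
  set R := mexp (t • A) with hRdef
  have hs : Summable fun k : ℕ => (k.factorial : ℝ)⁻¹ • (t • A) ^ k :=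
    NormedSpace.expSeries_summable' (𝕂 := ℝ) (t • A)
  have hRrow : ∀ a : Fin n, a ≠ i → a ≠ j → ∀ b, R a b = (1 : Matrix (Fin n) (Fin n) ℝ) a b := by
    intro a hai haj b
    refine mexp_entry_eq_one hs (fun k hk => pow_row_zero ?_ k hk b)
    intro x
    simp [Matrix.smul_apply, hArow a hai haj x]
  have hRcol : ∀ b : Fin n, b ≠ i → b ≠ j → ∀ a, R a b = (1 : Matrix (Fin n) (Fin n) ℝ) a b := by
    intro b hbi hbj a
    refine mexp_entry_eq_one hs (fun k hk => pow_col_zero ?_ k hk a)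
    intro x
    simp [Matrix.smul_apply, hAcol b hbi hbj x]
  set L := R * Matrix.diagonal d * Rᵀ with hLdef
  have hL : γ t * Λ * (γ t)ᵀ = L := by
    rw [hLdef, hDdiag, hγ t, ← hRdef, Matrix.transpose_mul]
    simp only [hDdef, Matrix.mul_assoc]
  have hLentry : ∀ a b, L a b = ∑ x, R a x * d x * R b x := by
    intro a b
    rw [hLdef, Matrix.mul_apply]
    simp [Matrix.mul_diagonal, Matrix.transpose_apply]
  have hLoff1 : ∀ a b : Fin n, a ≠ i → a ≠ j → a ≠ b → L a b = 0 := by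
    intro a b hai haj hab
    rw [hLentry]
    refine Finset.sum_eq_zero (fun x _ => ?_)
    by_cases hxa : x = a
    · subst hxa
      rw [hRcol x hai haj b, Matrix.one_apply_ne (Ne.symm hab), mul_zero]
    · rw [hRrow a hai haj x, Matrix.one_apply_ne (fun h => hxa (h.symm)), zero_mul, zero_mul]
  have hLoff2 : ∀ a b : Fin n, b ≠ i → b ≠ j → a ≠ b → L a b = 0 := by
    intro a b hbi hbj hab
    rw [hLentry]
    refine Finset.sum_eq_zero (fun x _ => ?_)
    by_cases hxb : x = b
    · subst hxb
      rw [hRcol x hbi hbj a, Matrix.one_apply_ne hab, zero_mul, zero_mul]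
    · rw [hRrow b hbi hbj x, Matrix.one_apply_ne (fun h => hxb (h.symm)), mul_zero]
  have hLne : ∀ a b : Fin n, a ≠ b → ¬(a = i ∧ b = j) → ¬(a = j ∧ b = i) → L a b = 0 := by
    intro a b hab h1 h2
    by_cases hai : a = i
    · subst hai
      exact hLoff2 a b (Ne.symm hab) (fun h => h1 ⟨rfl, h⟩) hab
    · by_cases haj : a = j
      · subst haj
        exact hLoff2 a b (fun h => h2 ⟨rfl, h⟩) (Ne.symm hab) hab
      · exact hLoff1 a b hai haj hab
  have hLsymm : L j i = L i j := by
    rw [hLentry, hLentry]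
    exact Finset.sum_congr rfl (fun x _ => by ring)
  have htodaM : todaM L = L i j • A := by
    ext a b
    simp only [todaM, Matrix.of_apply, Matrix.smul_apply, smul_eq_mul, hA,
      Matrix.sub_apply, Matrix.single, Matrix.of_apply]
    rcases lt_trichotomy a b with h | h | h
    · rw [if_pos h]
      by_cases hab : a = i ∧ b = j
      · obtain ⟨rfl, rfl⟩ := hab
        have : ¬(b = a ∧ a = b) := fun ⟨h1, _⟩ => hij' h1.symm
        simp [this]
      · have hne : ¬(a = j ∧ b = i) := fun ⟨h1, h2⟩ => absurd (h1 ▸ h2 ▸ h) (not_lt.mpr hij.le)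
        rw [hLne a b (ne_of_lt h) hab hne]
        have e1 : ¬(i = a ∧ j = b) := fun ⟨h1, h2⟩ => hab ⟨h1.symm, h2.symm⟩
        have e2 : ¬(j = a ∧ i = b) := fun ⟨h1, h2⟩ => hne ⟨h1.symm, h2.symm⟩
        simp [e1, e2]
    · subst h
      rw [if_neg (lt_irrefl a), if_neg (lt_irrefl a)]
      have e1 : ¬(i = a ∧ j = a) := fun ⟨h1, h2⟩ => hij' (h1.trans h2.symm)
      have e2 : ¬(j = a ∧ i = a) := fun ⟨h1, h2⟩ => hij' (h2.trans h1.symm)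
      simp [e1, e2]
    · rw [if_neg (not_lt.mpr h.le), if_pos h]
      by_cases hab : a = j ∧ b = i
      · obtain ⟨rfl, rfl⟩ := hab
        have e1 : ¬(b = a ∧ a = b) := fun ⟨h1, _⟩ => hij' h1
        simp [hLsymm, e1]
      · have hne : ¬(a = i ∧ b = j) := fun ⟨h1, h2⟩ => absurd (h1 ▸ h2 ▸ h) (not_lt.mpr hij.le)
        rw [hLne a b (ne_of_gt h) hne hab]
        have e1 : ¬(i = a ∧ j = b) := fun ⟨h1, h2⟩ => hne ⟨h1.symm, h2.symm⟩
        have e2 : ¬(j = a ∧ i = b) := fun ⟨h1, h2⟩ => hab ⟨h1.symm, h2.symm⟩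
        simp [e1, e2]
  -- the derivative
  have hkey : HasDerivAt (fun s : ℝ => NormedSpace.exp (s • A) * w)
      (A * NormedSpace.exp (t • A) * w) t :=
    (hasDerivAt_exp_smul_const' A t).mul_const w
  have hderiv : matDeriv γ t = A * γ t := by
    ext a b
    show deriv (fun s => γ s a b) t = (A * γ t) a b
    have heq : (fun s => γ s a b) = fun s => (E a b) (NormedSpace.exp (s • A) * w) := by
      funext s
      rw [hγ s, mexp_eq_exp]
      rfl
    have H := (E a b).hasFDerivAt.comp_hasDerivAt t hkey
    simp only [Function.comp_def] at H
    rw [heq, H.deriv]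
    show (A * NormedSpace.exp (t • A) * w) a b = (A * γ t) a b
    rw [hγ t, mexp_eq_exp, Matrix.mul_assoc]
  rw [hderiv, hL, htodaM, smul_mul_assoc]
  simp only [hL]
end

section
/- Fix n, indices i < j in Fin n, and a diagonal real n×n matrix D. Let A = E_{ij} − E_{ji}. Then for every t ∈ ℝ there exists a scalar k ∈ ℝ such that M(exp(tA) · D · exp(tA)ᵀ) = k • A, i.e. the Toda projector applied to the conjugate exp(tA) D exp(−tA) is a scalar multiple of E_{ij} − E_{ji}. -/
open Matrix

/-- A tsum of elements of a closed submodule lies in the submodule. -/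
lemma tsum_mem_of_isClosed {M : Type*} [AddCommGroup M] [Module ℝ M]
    [TopologicalSpace M] [IsTopologicalAddGroup M] [T2Space M]
    (p : Submodule ℝ M) (hp : IsClosed (p : Set M)) (f : ℕ → M)
    (h : ∀ k, f k ∈ p) : (∑' k, f k) ∈ p := by
  by_cases hs : Summable f
  · exact hp.mem_of_tendsto hs.hasSum.tendsto_sum_nat
      (Filter.Eventually.of_forall fun s => Submodule.sum_mem _ fun i _ => h i)
  · rw [tsum_eq_zero_of_not_summable hs]; exact p.zero_mem

/-- For a diagonal matrix `D` and `A = E_{ij} - E_{ji}` with `i < j`, the Toda projector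
applied to `exp(tA) · D · exp(tA)ᵀ` is a scalar multiple of `A`. -/
theorem todaM_of_conjugated_diagonal {n : ℕ} (i j : Fin n) (hij : i < j)
    (D : Matrix (Fin n) (Fin n) ℝ) (hD : D.IsDiag)
    (A : Matrix (Fin n) (Fin n) ℝ)
    (hA : A = Matrix.single i j (1 : ℝ) - Matrix.single j i (1 : ℝ)) :
    ∀ t : ℝ, ∃ k : ℝ, todaM (mexp (t • A) * D * (mexp (t • A))ᵀ) = k • A := by
  intro t
  have hijne : i ≠ j := ne_of_lt hij
  -- the submodule of matrices vanishing at off-diagonal entries outside {i,j}×{i,j}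
  set Q : Submodule ℝ (Matrix (Fin n) (Fin n) ℝ) :=
    { carrier := {B | ∀ p q, p ≠ q → ((p ≠ i ∧ p ≠ j) ∨ (q ≠ i ∧ q ≠ j)) → B p q = 0}
      add_mem' := fun hB hC p q h1 h2 => by
        simp [Matrix.add_apply, hB p q h1 h2, hC p q h1 h2]
      zero_mem' := fun p q _ _ => rfl
      smul_mem' := fun c B hB p q h1 h2 => by
        simp [Matrix.smul_apply, hB p q h1 h2] } with hQdef
  have hmem : ∀ B : Matrix (Fin n) (Fin n) ℝ, B ∈ Q ↔
      ∀ p q, p ≠ q → ((p ≠ i ∧ p ≠ j) ∨ (q ≠ i ∧ q ≠ j)) → B p q = 0 := fun B => Iff.rfl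
  have hmul : ∀ B C : Matrix (Fin n) (Fin n) ℝ, B ∈ Q → C ∈ Q → B * C ∈ Q := by
    intro B C hB hC
    rw [hmem] at *
    intro p q hpq hc
    rw [Matrix.mul_apply]
    apply Finset.sum_eq_zero
    intro r _
    rcases hc with ⟨h1, h2⟩ | ⟨h1, h2⟩
    · by_cases hrp : p = r
      · subst hrp
        rw [hC p q hpq (Or.inl ⟨h1, h2⟩), mul_zero]
      · rw [hB p r hrp (Or.inl ⟨h1, h2⟩), zero_mul]
    · by_cases hrq : r = q
      · subst hrq
        rw [hB p r hpq (Or.inr ⟨h1, h2⟩), zero_mul]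
      · rw [hC r q hrq (Or.inr ⟨h1, h2⟩), mul_zero]
  have h1Q : (1 : Matrix (Fin n) (Fin n) ℝ) ∈ Q := by
    rw [hmem]; intro p q hpq _; exact Matrix.one_apply_ne hpq
  have hAQ : A ∈ Q := by
    rw [hmem]; intro p q hpq hc
    subst hA
    rcases hc with ⟨h1, h2⟩ | ⟨h1, h2⟩ <;>
      simp [Matrix.sub_apply, Matrix.single, Ne.symm h1, Ne.symm h2]
  have hDQ : D ∈ Q := by
    rw [hmem]; intro p q hpq _; exact hD hpq
  have hTrans : ∀ B : Matrix (Fin n) (Fin n) ℝ, B ∈ Q → Bᵀ ∈ Q := by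
    intro B hB
    rw [hmem] at *
    intro p q hpq hc
    exact hB q p hpq.symm hc.symm
  have htAQ : t • A ∈ Q := Q.smul_mem t hAQ
  have hpow : ∀ k : ℕ, (t • A) ^ k ∈ Q := by
    intro k
    induction k with
    | zero => simpa using h1Q
    | succ m ih => rw [pow_succ]; exact hmul _ _ ih htAQ
  have hclosed : IsClosed (Q : Set (Matrix (Fin n) (Fin n) ℝ)) :=
    Submodule.closed_of_finiteDimensional Q
  have hexpQ : mexp (t • A) ∈ Q := by
    apply tsum_mem_of_isClosed Q hclosed
    intro k
    exact Q.smul_mem _ (hpow k)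
  set L := mexp (t • A) * D * (mexp (t • A))ᵀ with hL
  have hLQ : L ∈ Q := hmul _ _ (hmul _ _ hexpQ hDQ) (hTrans _ hexpQ)
  have hDsym : Dᵀ = D := hD.isSymm
  have hLsym : Lᵀ = L := by
    rw [hL, transpose_mul, transpose_mul, transpose_transpose, hDsym, Matrix.mul_assoc]
  have hLji : L j i = L i j := by
    conv_lhs => rw [← hLsym]
    rfl
  refine ⟨L i j, ?_⟩
  ext a b
  rw [hmem] at hLQ
  have hAentry : ∀ p q : Fin n, A p q =
      (if i = p ∧ j = q then (1 : ℝ) else 0) - (if j = p ∧ i = q then (1 : ℝ) else 0) := by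
    intro p q
    subst hA
    simp [Matrix.sub_apply, Matrix.single]
  simp only [todaM, Matrix.of_apply, Matrix.smul_apply, smul_eq_mul]
  rcases lt_trichotomy a b with hab | hab | hab
  · rw [if_pos hab]
    by_cases hai : a = i
    · by_cases hbj : b = j
      · subst hai; subst hbj
        rw [hAentry]
        simp [Ne.symm hijne]
      · have : b ≠ i := by
          intro h; exact absurd (h ▸ hab) (by simp [hai])
        rw [hLQ a b (ne_of_lt hab) (Or.inr ⟨this, hbj⟩), hAentry,
          if_neg (fun h => hbj h.2.symm), if_neg (fun h => this h.2.symm)]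
        ring
    · by_cases haj : a = j
      · have hbne : b ≠ i ∧ b ≠ j := by
          constructor
          · intro h
            subst h; subst haj
            exact absurd hab (not_lt_of_gt hij)
          · intro h
            subst h; subst haj
            exact lt_irrefl _ hab
        rw [hLQ a b (ne_of_lt hab) (Or.inr hbne), hAentry,
          if_neg (fun h => hbne.2 h.2.symm), if_neg (fun h => hbne.1 h.2.symm)]
        ring
      · rw [hLQ a b (ne_of_lt hab) (Or.inl ⟨hai, haj⟩), hAentry,
          if_neg (fun h => hai h.1.symm), if_neg (fun h => haj h.1.symm)]
        ring
  · subst hab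
    rw [if_neg (lt_irrefl _), if_neg (lt_irrefl _), hAentry]
    have h1 : ¬(i = a ∧ j = a) := fun h => hijne (h.1.trans h.2.symm)
    have h2 : ¬(j = a ∧ i = a) := fun h => hijne (h.2.trans h.1.symm)
    rw [if_neg h1, if_neg h2]
    ring
  · rw [if_neg (not_lt_of_gt hab), if_pos hab]
    by_cases haj : a = j
    · by_cases hbi : b = i
      · subst haj; subst hbi
        rw [hLji, hAentry]
        rw [if_neg (fun h => hijne h.1), if_pos ⟨rfl, rfl⟩]
        ring
      · have hbj : b ≠ j := by
          intro h; exact absurd (h ▸ hab) (by simp [haj])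
        rw [hLQ a b (ne_of_gt hab) (Or.inr ⟨hbi, hbj⟩), hAentry,
          if_neg (fun h => hbj h.2.symm), if_neg (fun h => hbi h.2.symm)]
        ring
    · by_cases hai : a = i
      · have hbne : b ≠ i ∧ b ≠ j := by
          constructor
          · intro h
            subst h; subst hai
            exact lt_irrefl _ hab
          · intro h
            subst h; subst hai
            exact absurd hab (not_lt_of_gt hij)
        rw [hLQ a b (ne_of_gt hab) (Or.inr hbne), hAentry,
          if_neg (fun h => hbne.2 h.2.symm), if_neg (fun h => hbne.1 h.2.symm)]
        ring
      · rw [hLQ a b (ne_of_gt hab) (Or.inl ⟨hai, haj⟩), hAentry,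
          if_neg (fun h => hai h.1.symm), if_neg (fun h => haj h.1.symm)]
        ring
end

section
/- Fix n and indices i < j in Fin n, let A = E_{ij} − E_{ji}, and let D be a diagonal real n×n matrix. Then for every t ∈ ℝ, the conjugate exp(tA) · D · exp(−tA) lies in the linear subspace of Matrix n n ℝ spanned by the diagonal matrices together with the matrix E_{ij} + E_{ji}. (Equivalently: exp(tA) D exp(−tA) is symmetric and all of its off-diagonal entries vanish except possibly the (i,j) and (j,i) entries.) -/
set_option maxHeartbeats 1000000

open Matrix

/-- The subspace of `Matrix (Fin n) (Fin n) ℝ` spanned by the diagonal matrices together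
with the matrix `E i j + E j i`. -/
def spanDiagPlus {n : ℕ} (i j : Fin n) : Submodule ℝ (Matrix (Fin n) (Fin n) ℝ) :=
  Submodule.span ℝ
    ({X : Matrix (Fin n) (Fin n) ℝ | X.IsDiag} ∪
      {Matrix.single i j (1 : ℝ) + Matrix.single j i (1 : ℝ)})

namespace ExpConjAux

variable {n : ℕ} (i j : Fin n)

noncomputable abbrev e (a b : Fin n) : Matrix (Fin n) (Fin n) ℝ := Matrix.single a b 1

lemma diag_mul_e (d : Fin n → ℝ) (a b : Fin n) :
    Matrix.diagonal d * e a b = d a • e a b := by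
  ext x y
  simp [Matrix.diagonal_mul, Matrix.single, Matrix.smul_apply]
  aesop

lemma e_mul_diag (d : Fin n → ℝ) (a b : Fin n) :
    e a b * Matrix.diagonal d = d b • e a b := by
  ext x y
  simp [Matrix.mul_diagonal, Matrix.single, Matrix.smul_apply]
  aesop

section
variable (hij : i ≠ j)

lemma A_mul_A (hij : i ≠ j) :
    (e i j - e j i) * (e i j - e j i) = -(e i i + e j j) := by
  simp only [sub_mul, mul_sub, Matrix.single_mul_single_same,
    Matrix.single_mul_single_of_ne, hij, hij.symm, ne_eq, not_false_iff, mul_one]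
  abel

lemma A_mul_P (hij : i ≠ j) :
    (e i j - e j i) * (e i i + e j j) = e i j - e j i := by
  simp only [sub_mul, mul_add, Matrix.single_mul_single_same,
    Matrix.single_mul_single_of_ne, hij, hij.symm, ne_eq, not_false_iff, mul_one]
  abel

lemma pow_odd (hij : i ≠ j) (k : ℕ) :
    (e i j - e j i) ^ (2 * k + 1) = ((-1 : ℝ) ^ k) • (e i j - e j i) := by
  induction k with
  | zero => simp
  | succ m ih =>
    have h : 2 * (m + 1) + 1 = (2 * m + 1) + 2 := by ring
    rw [h, pow_add, ih, pow_two, A_mul_A i j hij, smul_mul_assoc, mul_neg,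
      A_mul_P i j hij, pow_succ]
    module

lemma pow_even (hij : i ≠ j) (k : ℕ) :
    (e i j - e j i) ^ (2 * (k + 1)) = ((-1 : ℝ) ^ (k + 1)) • (e i i + e j j) := by
  have h : 2 * (k + 1) = (2 * k + 1) + 1 := by ring
  rw [h, pow_succ, pow_odd i j hij, smul_mul_assoc, A_mul_A i j hij, pow_succ]
  module

lemma mexp_eq (hij : i ≠ j) (t : ℝ) :
    mexp (t • (e i j - e j i)) =
      1 + (Real.cos t - 1) • (e i i + e j j) + Real.sin t • (e i j - e j i) := by
  set A := e i j - e j i with hA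
  set P := e i i + e j j with hP
  have hodd : HasSum (fun k : ℕ => (((2 * k + 1).factorial : ℝ))⁻¹ • (t • A) ^ (2 * k + 1))
      (Real.sin t • A) := by
    have h := (Real.hasSum_sin t).smul_const A
    have he : (fun k : ℕ => (((2 * k + 1).factorial : ℝ))⁻¹ • (t • A) ^ (2 * k + 1))
        = fun k : ℕ => ((-1 : ℝ) ^ k * t ^ (2 * k + 1) / ((2 * k + 1).factorial : ℝ)) • A := by
      funext k
      rw [smul_pow, pow_odd i j hij, smul_smul, smul_smul, div_eq_mul_inv]
      ring_nf
      rfl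
    rw [he]
    exact h
  have heven : HasSum (fun k : ℕ => (((2 * k).factorial : ℝ))⁻¹ • (t • A) ^ (2 * k))
      (((1 : Matrix (Fin n) (Fin n) ℝ) - P) + Real.cos t • P) := by
    have h1 : HasSum (fun k : ℕ => ((-1 : ℝ) ^ k * t ^ (2 * k) / ((2 * k).factorial : ℝ)) • P)
        (Real.cos t • P) := (Real.hasSum_cos t).smul_const P
    have h2 : HasSum (fun k : ℕ =>
        if k = 0 then ((1 : Matrix (Fin n) (Fin n) ℝ) - P) else 0)
        ((1 : Matrix (Fin n) (Fin n) ℝ) - P) := hasSum_ite_eq 0 _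
    have h3 := h2.add h1
    have he : (fun k : ℕ => (((2 * k).factorial : ℝ))⁻¹ • (t • A) ^ (2 * k))
        = fun k : ℕ => (if k = 0 then ((1 : Matrix (Fin n) (Fin n) ℝ) - P) else 0)
            + ((-1 : ℝ) ^ k * t ^ (2 * k) / ((2 * k).factorial : ℝ)) • P := by
      funext k
      cases k with
      | zero => simp [hP]
      | succ m =>
        rw [if_neg (Nat.succ_ne_zero m), zero_add, smul_pow, pow_even i j hij,
          smul_smul, smul_smul, div_eq_mul_inv]
        ring_nf
        rfl
    rw [he]
    exact h3
  have hsum := HasSum.even_add_odd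
    (f := fun k : ℕ => ((k.factorial : ℝ))⁻¹ • (t • A) ^ k) heven hodd
  have h4 : mexp (t • A) = ((1 : Matrix (Fin n) (Fin n) ℝ) - P) + Real.cos t • P
      + Real.sin t • A := by
    unfold mexp
    exact hsum.tsum_eq
  rw [h4, sub_smul, one_smul]
  abel
end
end ExpConjAux

open ExpConjAux in
/-- For `A = E_{ij} - E_{ji}` (`i < j`) and `D` diagonal, the conjugate
`exp(tA) · D · exp(-tA)` lies in the span of the diagonal matrices and `E_{ij} + E_{ji}`. -/
theorem exp_conj_diagonal_mem_span {n : ℕ} (i j : Fin n) (hij : i < j)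
    (A : Matrix (Fin n) (Fin n) ℝ)
    (hA : A = Matrix.single i j (1 : ℝ) - Matrix.single j i (1 : ℝ))
    (D : Matrix (Fin n) (Fin n) ℝ) (hD : D.IsDiag) :
    ∀ t : ℝ, mexp (t • A) * D * mexp (-(t • A)) ∈ spanDiagPlus i j := by
  intro t
  have hne : i ≠ j := ne_of_lt hij
  have hDeq : D = Matrix.diagonal D.diag := (hD.diagonal_diag).symm
  set d : Fin n → ℝ := D.diag with hd
  have hA' : A = e i j - e j i := hA
  have h1 : mexp (t • A) = 1 + (Real.cos t - 1) • (e i i + e j j)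
      + Real.sin t • (e i j - e j i) := by rw [hA']; exact mexp_eq i j hne t
  have h2 : mexp (-(t • A)) = 1 + (Real.cos t - 1) • (e i i + e j j)
      + (- Real.sin t) • (e i j - e j i) := by
    rw [hA', ← neg_smul]
    rw [mexp_eq i j hne (-t), Real.cos_neg, Real.sin_neg]
  set c := Real.cos t
  set s := Real.sin t
  have key : mexp (t • A) * D * mexp (-(t • A)) =
      (Matrix.diagonal d + ((c - 1) * (c - 1) + 2 * (c - 1)) • (d i • e i i + d j • e j j)
        + (s * s) • (d j • e i i + d i • e j j))
      + (s * c * (d j - d i)) • (e i j + e j i) := by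
    rw [h1, h2]
    rw [hDeq]
    simp only [mul_add, add_mul, mul_sub, sub_mul, smul_mul_assoc, mul_smul_comm,
      one_mul, mul_one, Matrix.single_mul_single_same,
      Matrix.single_mul_single_of_ne, hne, hne.symm, ne_eq, not_false_iff,
      diag_mul_e, e_mul_diag, smul_add, smul_sub, smul_smul, smul_zero, mul_zero, zero_mul]
    module
  rw [key]
  refine Submodule.add_mem _ ?_ ?_
  · apply Submodule.subset_span
    left
    show Matrix.IsDiag _
    intro a b hab
    have hii : ¬(i = a ∧ i = b) := by rintro ⟨rfl, rfl⟩; exact hab rfl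
    have hjj : ¬(j = a ∧ j = b) := by rintro ⟨rfl, rfl⟩; exact hab rfl
    simp [Matrix.single, Matrix.diagonal_apply_ne _ hab, hii, hjj]
  · exact Submodule.smul_mem _ _ (Submodule.subset_span (Or.inr rfl))
end

section
/- Fix n and a diagonal real n×n matrix Λ. Suppose Ψ : ℝ → Matrix n n ℝ is differentiable, takes values in orthogonal matrices (Ψ(t)·Ψ(t)ᵀ = 1 for all t), and satisfies the matrix ODE Ψ'(t) = −M(Ψ(t)·Λ·Ψ(t)ᵀ)·Ψ(t) for all t. Then the curve L(t) := Ψ(t)·Λ·Ψ(t)ᵀ satisfies the full symmetric Toda equation in Lax form: L'(t) = ⁅L(t), M(L(t))⁆ for all t. (Thus solutions of the vector field T^Λ(Ψ) = −M(Ad_Ψ Λ)·Ψ on the compact group produce, via L = Ad_Ψ(Λ), solutions of the Toda system on symmetric matrices.) -/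
open Matrix

lemma matDeriv_mul {n : ℕ} (A B : ℝ → Matrix (Fin n) (Fin n) ℝ)
    (hA : ∀ a b : Fin n, Differentiable ℝ fun t => A t a b)
    (hB : ∀ a b : Fin n, Differentiable ℝ fun t => B t a b) (t : ℝ) :
    matDeriv (fun s => A s * B s) t = matDeriv A t * B t + A t * matDeriv B t := by
  ext a b
  simp only [matDeriv, Matrix.of_apply, Matrix.mul_apply, Matrix.add_apply]
  rw [deriv_fun_sum (fun j _ => ((hA a j).fun_mul (hB j b)) t)]
  rw [← Finset.sum_add_distrib]
  refine Finset.sum_congr rfl fun j _ => ?_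
  rw [deriv_fun_mul ((hA a j) t) ((hB j b) t)]

lemma diff_mul_entry {n : ℕ} (A B : ℝ → Matrix (Fin n) (Fin n) ℝ)
    (hA : ∀ a b : Fin n, Differentiable ℝ fun t => A t a b)
    (hB : ∀ a b : Fin n, Differentiable ℝ fun t => B t a b) :
    ∀ a b : Fin n, Differentiable ℝ fun t => (A t * B t) a b := by
  intro a b
  have : (fun t => (A t * B t) a b) = fun t => ∑ j, A t a j * B t j b := by
    funext s; simp [Matrix.mul_apply]
  rw [this]
  exact Differentiable.fun_sum fun j _ => (hA a j).mul (hB j b)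

lemma todaM_transpose {n : ℕ} (L : Matrix (Fin n) (Fin n) ℝ) (hL : Lᵀ = L) :
    (todaM L)ᵀ = -(todaM L) := by
  ext a b
  have hLe : L b a = L a b := by
    calc L b a = Lᵀ a b := rfl
    _ = L a b := by rw [hL]
  simp only [Matrix.transpose_apply, Matrix.neg_apply, todaM, Matrix.of_apply]
  rcases lt_trichotomy a b with h | h | h
  · simp [h, not_lt.mpr h.le, hLe]
  · simp [h, lt_irrefl]
  · simp [h, not_lt.mpr h.le, hLe]

/-- If `Ψ` solves `Ψ' = -M(Ψ Λ Ψᵀ) Ψ` on the orthogonal group, then `L = Ψ Λ Ψᵀ`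
solves the full symmetric Toda equation in Lax form `L' = ⁅L, M(L)⁆`. -/
theorem toda_group_flow_gives_lax_solution {n : ℕ}
    (Λ : Matrix (Fin n) (Fin n) ℝ) (hΛ : Λ.IsDiag)
    (Ψ : ℝ → Matrix (Fin n) (Fin n) ℝ)
    (hdiff : ∀ a b : Fin n, Differentiable ℝ fun t => Ψ t a b)
    (horth : ∀ t : ℝ, Ψ t * (Ψ t)ᵀ = 1)
    (hode : ∀ t : ℝ, matDeriv Ψ t = -(todaM (Ψ t * Λ * (Ψ t)ᵀ) * Ψ t)) :
    ∀ t : ℝ, matDeriv (fun s => Ψ s * Λ * (Ψ s)ᵀ) t =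
      ⁅Ψ t * Λ * (Ψ t)ᵀ, todaM (Ψ t * Λ * (Ψ t)ᵀ)⁆ := by
  intro t
  set L := Ψ t * Λ * (Ψ t)ᵀ with hLdef
  have hΛsymm : Λᵀ = Λ := by
    ext a b
    by_cases h : a = b
    · subst h; simp
    · simp [Matrix.transpose_apply, hΛ h, hΛ (Ne.symm h)]
  have hLsymm : Lᵀ = L := by
    rw [hLdef]
    simp [Matrix.transpose_mul, hΛsymm, Matrix.mul_assoc]
  have hdiffT : ∀ a b : Fin n, Differentiable ℝ fun s => (Ψ s)ᵀ a b := fun a b => hdiff b a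
  have hdiffΛ : ∀ a b : Fin n, Differentiable ℝ fun s => (Ψ s * Λ) a b :=
    diff_mul_entry _ _ hdiff (fun _ _ => differentiable_const _)
  have hd1 : matDeriv (fun s => Ψ s * Λ) t = matDeriv Ψ t * Λ := by
    rw [matDeriv_mul Ψ (fun _ => Λ) hdiff (fun _ _ => differentiable_const _)]
    have : matDeriv (fun _ : ℝ => Λ) t = 0 := by
      ext a b; simp [matDeriv]
    rw [this, mul_zero, add_zero]
  have hdT : matDeriv (fun s => (Ψ s)ᵀ) t = (matDeriv Ψ t)ᵀ := by
    ext a b; simp [matDeriv]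
  rw [matDeriv_mul (fun s => Ψ s * Λ) (fun s => (Ψ s)ᵀ) hdiffΛ hdiffT, hd1, hdT, hode t]
  have hMT : (todaM L)ᵀ = -(todaM L) := todaM_transpose L hLsymm
  rw [Matrix.transpose_neg, Matrix.transpose_mul, hMT, Ring.lie_def, hLdef]
  noncomm_ring
end

section
/- Fix n and suppose L : ℝ → Matrix n n ℝ is differentiable and satisfies the Lax equation L'(t) = ⁅L(t), M(L(t))⁆ for all t. Then the Toda flow is isospectral: the characteristic polynomial of L(t) is independent of t, i.e. for all t ∈ ℝ, charpoly(L(t)) = charpoly(L(0)). In particular, for every natural number m, the trace Tr(L(t)^m) is constant in t. -/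
open Matrix

open Finset in
/-- Determinant as an explicit sum over permutations, with real sign. -/
lemma todaAux_det_eq_sum {n : ℕ} (M : Matrix (Fin n) (Fin n) ℝ) :
    M.det = ∑ σ : Equiv.Perm (Fin n), ((Equiv.Perm.sign σ : ℤ) : ℝ) * ∏ j, M (σ j) j := by
  simp [Matrix.det_apply, Units.smul_def, zsmul_eq_mul]

open Finset in
/-- Derivative of the determinant of a matrix curve with entrywise derivatives. -/
lemma todaAux_hasDerivAt_det {n : ℕ} (A : ℝ → Matrix (Fin n) (Fin n) ℝ)
    (A' : Matrix (Fin n) (Fin n) ℝ) (t : ℝ)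
    (h : ∀ a b, HasDerivAt (fun s => A s a b) (A' a b) t) :
    HasDerivAt (fun s => (A s).det)
      (∑ i, ((A t).updateCol i (fun r => A' r i)).det) t := by
  have key : ∀ σ : Equiv.Perm (Fin n),
      HasDerivAt (fun s => ((Equiv.Perm.sign σ : ℤ) : ℝ) * ∏ j, A s (σ j) j)
        (((Equiv.Perm.sign σ : ℤ) : ℝ) *
          ∑ i, (∏ j ∈ univ.erase i, A t (σ j) j) * A' (σ i) i) t := by
    intro σ
    have hp := HasDerivAt.fun_finsetProd (u := (univ : Finset (Fin n)))
      (f := fun j s => A s (σ j) j) (f' := fun j => A' (σ j) j) (x := t)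
      (fun i _ => h (σ i) i)
    simpa [smul_eq_mul, mul_comm] using hp.const_mul ((Equiv.Perm.sign σ : ℤ) : ℝ)
  have hsum := HasDerivAt.fun_sum (u := (univ : Finset (Equiv.Perm (Fin n))))
    (fun σ _ => key σ)
  have hfun : (fun s => (A s).det) =
      fun s => ∑ σ : Equiv.Perm (Fin n), ((Equiv.Perm.sign σ : ℤ) : ℝ) * ∏ j, A s (σ j) j :=
    funext fun s => todaAux_det_eq_sum (A s)
  rw [hfun]
  refine hsum.congr_deriv (Eq.symm ?_)
  have hupd : ∀ i : Fin n, ((A t).updateCol i (fun r => A' r i)).det =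
      ∑ σ : Equiv.Perm (Fin n), ((Equiv.Perm.sign σ : ℤ) : ℝ) *
        ((∏ j ∈ univ.erase i, A t (σ j) j) * A' (σ i) i) := by
    intro i
    rw [todaAux_det_eq_sum]
    refine Finset.sum_congr rfl fun σ _ => ?_
    congr 1
    rw [← Finset.mul_prod_erase univ _ (Finset.mem_univ i), mul_comm]
    congr 1
    · refine Finset.prod_congr rfl fun j hj => ?_
      rw [Matrix.updateCol_apply, if_neg (Finset.mem_erase.mp hj).1]
    · rw [Matrix.updateCol_apply, if_pos rfl]
  calc ∑ i, ((A t).updateCol i (fun r => A' r i)).det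
      = ∑ i, ∑ σ : Equiv.Perm (Fin n), ((Equiv.Perm.sign σ : ℤ) : ℝ) *
          ((∏ j ∈ univ.erase i, A t (σ j) j) * A' (σ i) i) :=
        Finset.sum_congr rfl fun i _ => hupd i
    _ = ∑ σ : Equiv.Perm (Fin n), ∑ i, ((Equiv.Perm.sign σ : ℤ) : ℝ) *
          ((∏ j ∈ univ.erase i, A t (σ j) j) * A' (σ i) i) := Finset.sum_comm
    _ = ∑ σ : Equiv.Perm (Fin n), ((Equiv.Perm.sign σ : ℤ) : ℝ) *
          ∑ i, (∏ j ∈ univ.erase i, A t (σ j) j) * A' (σ i) i := by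
        simp [Finset.mul_sum]

/-- A sum of determinants with updated columns is a trace against the adjugate. -/
lemma todaAux_sum_updateColumn {n : ℕ} (A B : Matrix (Fin n) (Fin n) ℝ) :
    (∑ i, (A.updateCol i (fun r => B r i)).det) = (A.adjugate * B).trace := by
  have : ∀ i : Fin n, (A.updateCol i (fun r => B r i)).det
      = ∑ k, A.adjugate i k * B k i := by
    intro i
    rw [← Matrix.cramer_apply, Matrix.cramer_eq_adjugate_mulVec]
    rfl
  simp only [this, Matrix.trace, Matrix.diag, Matrix.mul_apply]

/-- The adjugate of `x • 1 - L` commutes with `L`. -/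
lemma todaAux_adjugate_comm {n : ℕ} (x : ℝ) (Lt : Matrix (Fin n) (Fin n) ℝ) :
    (x • (1 : Matrix (Fin n) (Fin n) ℝ) - Lt).adjugate * Lt
      = Lt * (x • (1 : Matrix (Fin n) (Fin n) ℝ) - Lt).adjugate := by
  have key : ∀ A : Matrix (Fin n) (Fin n) ℝ,
      A.adjugate * (x • (1 : Matrix (Fin n) (Fin n) ℝ) - A)
        = (x • (1 : Matrix (Fin n) (Fin n) ℝ) - A) * A.adjugate := by
    intro A
    rw [Matrix.mul_sub, Matrix.sub_mul, Matrix.mul_smul, Matrix.smul_mul, Matrix.mul_one,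
      Matrix.one_mul, Matrix.adjugate_mul, Matrix.mul_adjugate]
  have h := key (x • (1 : Matrix (Fin n) (Fin n) ℝ) - Lt)
  rwa [sub_sub_cancel] at h

/-- The key vanishing: trace of `adj(x•1 - L) * ⁅L, M⁆` is zero. -/
lemma todaAux_trace_zero {n : ℕ} (x : ℝ) (Lt Mt : Matrix (Fin n) (Fin n) ℝ) :
    ((x • (1 : Matrix (Fin n) (Fin n) ℝ) - Lt).adjugate * (Lt * Mt - Mt * Lt)).trace = 0 := by
  set P := (x • (1 : Matrix (Fin n) (Fin n) ℝ) - Lt).adjugate with hP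
  have hcomm : P * Lt = Lt * P := todaAux_adjugate_comm x Lt
  have h1 : (P * (Mt * Lt)).trace = (P * (Lt * Mt)).trace := by
    rw [← Matrix.mul_assoc, Matrix.trace_mul_comm (P * Mt) Lt, ← Matrix.mul_assoc,
      ← hcomm, Matrix.mul_assoc]
  rw [Matrix.mul_sub, Matrix.trace_sub, h1, sub_self]

/-- Evaluation of the characteristic polynomial. -/
lemma todaAux_eval_charpoly {n : ℕ} (x : ℝ) (M : Matrix (Fin n) (Fin n) ℝ) :
    M.charpoly.eval x = (x • (1 : Matrix (Fin n) (Fin n) ℝ) - M).det := by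
  rw [Matrix.charpoly, ← Polynomial.coe_evalRingHom, RingHom.map_det]
  congr 1
  ext i j
  by_cases h : i = j
  · subst h
    simp [Matrix.charmatrix_apply_eq, Matrix.one_apply]
  · simp [Matrix.charmatrix_apply_ne _ _ _ h, Matrix.one_apply, h]

/-- The Toda flow in Lax form `L' = ⁅L, M(L)⁆` is isospectral: the characteristic
polynomial of `L t` is independent of `t`; in particular all traces `Tr(L(t)^m)` are
constant in `t`. -/
theorem toda_flow_isospectral {n : ℕ}
    (L : ℝ → Matrix (Fin n) (Fin n) ℝ)
    (hdiff : ∀ a b : Fin n, Differentiable ℝ fun t => L t a b)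
    (hode : ∀ t : ℝ, matDeriv L t = ⁅L t, todaM (L t)⁆) :
    (∀ t : ℝ, (L t).charpoly = (L 0).charpoly) ∧
    (∀ m : ℕ, ∀ t : ℝ, ((L t) ^ m).trace = ((L 0) ^ m).trace) := by
  -- entrywise derivative of L is the commutator
  have hC : ∀ (t : ℝ) (a b : Fin n),
      HasDerivAt (fun s => L s a b) ((⁅L t, todaM (L t)⁆) a b) t := by
    intro t a b
    have h1 : deriv (fun s => L s a b) t = (⁅L t, todaM (L t)⁆) a b := by
      have := congrFun (congrFun (hode t) a) b
      simpa [matDeriv] using this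
    exact h1 ▸ (hdiff a b t).hasDerivAt
  constructor
  · -- characteristic polynomial is constant
    intro t
    apply Polynomial.funext
    intro x
    rw [todaAux_eval_charpoly, todaAux_eval_charpoly]
    have hder : ∀ τ : ℝ,
        HasDerivAt (fun s => (x • (1 : Matrix (Fin n) (Fin n) ℝ) - L s).det) 0 τ := by
      intro τ
      set C := ⁅L τ, todaM (L τ)⁆ with hCdef
      have hA : ∀ a b : Fin n,
          HasDerivAt (fun s => (x • (1 : Matrix (Fin n) (Fin n) ℝ) - L s) a b)
            ((-C) a b) τ := by
        intro a b
        have := (hC τ a b).const_sub ((x • (1 : Matrix (Fin n) (Fin n) ℝ)) a b)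
        simpa [Matrix.sub_apply, Matrix.neg_apply] using this
      have hd := todaAux_hasDerivAt_det (fun s => x • (1 : Matrix (Fin n) (Fin n) ℝ) - L s)
        (-C) τ hA
      have hval : (∑ i, ((x • (1 : Matrix (Fin n) (Fin n) ℝ) - L τ).updateCol i
          (fun r => (-C) r i)).det) = 0 := by
        rw [todaAux_sum_updateColumn]
        have : (x • (1 : Matrix (Fin n) (Fin n) ℝ) - L τ).adjugate * (-C)
            = -((x • (1 : Matrix (Fin n) (Fin n) ℝ) - L τ).adjugate * C) := by
          rw [Matrix.mul_neg]
        rw [this, Matrix.trace_neg, hCdef]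
        have := todaAux_trace_zero x (L τ) (todaM (L τ))
        simp only [Ring.lie_def] at *
        rw [this, neg_zero]
      exact hval ▸ hd
    have hdiffD : Differentiable ℝ (fun s => (x • (1 : Matrix (Fin n) (Fin n) ℝ) - L s).det) :=
      fun τ => (hder τ).differentiableAt
    have hzero : ∀ τ, deriv (fun s => (x • (1 : Matrix (Fin n) (Fin n) ℝ) - L s).det) τ = 0 :=
      fun τ => (hder τ).deriv
    exact is_const_of_deriv_eq_zero hdiffD hzero t 0
  · -- traces of powers are constant
    intro m t
    -- derivative of entries of L^m
    have hpow : ∀ (τ : ℝ) (m : ℕ) (a b : Fin n),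
        HasDerivAt (fun s => ((L s) ^ m) a b)
          ((∑ k ∈ Finset.range m,
            (L τ) ^ k * ⁅L τ, todaM (L τ)⁆ * (L τ) ^ (m - 1 - k)) a b) τ := by
      intro τ m
      induction m with
      | zero =>
        intro a b
        simpa using hasDerivAt_const τ ((1 : Matrix (Fin n) (Fin n) ℝ) a b)
      | succ m ih =>
        intro a b
        set C := ⁅L τ, todaM (L τ)⁆ with hCdef
        set D := ∑ k ∈ Finset.range m, (L τ) ^ k * C * (L τ) ^ (m - 1 - k) with hD
        have hentry : ∀ s : ℝ, ((L s) ^ (m + 1)) a b = ∑ c, ((L s) ^ m) a c * L s c b := by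
          intro s
          rw [pow_succ, Matrix.mul_apply]
        have hterm : ∀ c : Fin n, HasDerivAt (fun s => ((L s) ^ m) a c * L s c b)
            (D a c * L τ c b + ((L τ) ^ m) a c * C c b) τ :=
          fun c => (ih a c).mul (hC τ c b)
        have hs := HasDerivAt.fun_sum (u := (Finset.univ : Finset (Fin n)))
          (fun c _ => hterm c)
        have heq : (fun s => ((L s) ^ (m + 1)) a b)
            = fun s => ∑ c, ((L s) ^ m) a c * L s c b := funext hentry
        rw [heq]
        refine hs.congr_deriv (Eq.symm ?_)
        have hDsucc : (∑ k ∈ Finset.range (m + 1),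
            (L τ) ^ k * C * (L τ) ^ (m + 1 - 1 - k)) = D * L τ + (L τ) ^ m * C := by
          rw [Finset.sum_range_succ]
          congr 1
          · rw [hD, Finset.sum_mul]
            refine Finset.sum_congr rfl fun k hk => ?_
            have hk' : k < m := Finset.mem_range.mp hk
            rw [show m + 1 - 1 - k = (m - 1 - k) + 1 from by omega, pow_succ,
              ← Matrix.mul_assoc]
          · simp
        rw [hDsucc, Matrix.add_apply, Matrix.mul_apply, Matrix.mul_apply, ← Finset.sum_add_distrib]
    -- trace of the derivative is zero
    have htrD : ∀ (τ : ℝ) (m : ℕ),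
        (∑ k ∈ Finset.range m,
          (L τ) ^ k * ⁅L τ, todaM (L τ)⁆ * (L τ) ^ (m - 1 - k)).trace = 0 := by
      intro τ m
      set C := ⁅L τ, todaM (L τ)⁆ with hCdef
      have hc : ∀ k ∈ Finset.range m,
          ((L τ) ^ k * C * (L τ) ^ (m - 1 - k)).trace = ((L τ) ^ (m - 1) * C).trace := by
        intro k hk
        have hk' : k < m := Finset.mem_range.mp hk
        rw [Matrix.trace_mul_comm ((L τ) ^ k * C) ((L τ) ^ (m - 1 - k)),
          ← Matrix.mul_assoc, ← pow_add, show m - 1 - k + k = m - 1 from by omega]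
      have hzero : ((L τ) ^ (m - 1) * C).trace = 0 := by
        rw [hCdef, Ring.lie_def, Matrix.mul_sub, Matrix.trace_sub]
        rw [← Matrix.mul_assoc, ← Matrix.mul_assoc,
          Matrix.trace_mul_comm ((L τ) ^ (m - 1) * todaM (L τ)) (L τ), ← Matrix.mul_assoc]
        rw [← pow_succ, ← pow_succ']
        exact sub_self _
      rw [Matrix.trace_sum, Finset.sum_congr rfl hc]
      simp [hzero]
    have hder : ∀ τ : ℝ, HasDerivAt (fun s => ((L s) ^ m).trace) 0 τ := by
      intro τ
      have hentries := fun (a : Fin n) => hpow τ m a a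
      have hs := HasDerivAt.fun_sum (u := (Finset.univ : Finset (Fin n)))
        (fun a _ => hentries a)
      have heq : (fun s => ((L s) ^ m).trace) = fun s => ∑ a, ((L s) ^ m) a a := by
        funext s
        rw [Matrix.trace]
        rfl
      rw [heq]
      have : (∑ a, (∑ k ∈ Finset.range m,
          (L τ) ^ k * ⁅L τ, todaM (L τ)⁆ * (L τ) ^ (m - 1 - k)) a a) = 0 := htrD τ m
      exact this ▸ hs
    have hdiffT : Differentiable ℝ (fun s => ((L s) ^ m).trace) :=
      fun τ => (hder τ).differentiableAt
    exact is_const_of_deriv_eq_zero hdiffT (fun τ => (hder τ).deriv) t 0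
end

section
/- Fix n and let Λ be a diagonal real n×n matrix with pairwise distinct diagonal entries. For an orthogonal matrix Ψ ∈ O(n), the following are equivalent: (1) Ψ is a singular (fixed) point of the Toda vector field, i.e. M(Ψ·Λ·Ψᵀ) = 0; (2) Ψ·Λ·Ψᵀ is a diagonal matrix; (3) Ψ is a signed permutation matrix, i.e. there is a permutation σ ∈ S_n and signs ε : Fin n → {±1} with Ψ_{ab} = ε(b) if a = σ(b) and Ψ_{ab} = 0 otherwise. (For generic Λ, the singular points of the field T^Λ on K = O(n) coincide with the normalizer N_K(𝔥) of the diagonal Cartan subalgebra.) -/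
open Matrix

lemma entry_formula {n : ℕ} (Λ : Matrix (Fin n) (Fin n) ℝ) (hΛ : Λ.IsDiag)
    (Ψ : Matrix (Fin n) (Fin n) ℝ) (a b : Fin n) :
    (Ψ * Λ * Ψᵀ) a b = ∑ c, Ψ a c * Λ c c * Ψ b c := by
  rw [mul_assoc, mul_apply]
  congr 1
  ext c
  rw [mul_apply]
  rw [Finset.sum_eq_single c]
  · simp [mul_assoc]
  · intro d _ hd
    rw [hΛ (Ne.symm hd)]
    ring
  · simp

/-- For `Λ` diagonal with pairwise distinct diagonal entries and `Ψ` orthogonal, the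
following are equivalent: `Ψ` is a singular point of the Toda field (`M(Ψ Λ Ψᵀ) = 0`),
`Ψ Λ Ψᵀ` is diagonal, and `Ψ` is a signed permutation matrix. -/
theorem toda_singular_points {n : ℕ}
    (Λ : Matrix (Fin n) (Fin n) ℝ) (hΛ : Λ.IsDiag)
    (hdist : ∀ a b : Fin n, a ≠ b → Λ a a ≠ Λ b b)
    (Ψ : Matrix (Fin n) (Fin n) ℝ) (hΨ : Ψ * Ψᵀ = 1) :
    (todaM (Ψ * Λ * Ψᵀ) = 0 ↔ (Ψ * Λ * Ψᵀ).IsDiag) ∧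
    ((Ψ * Λ * Ψᵀ).IsDiag ↔
      ∃ (σ : Equiv.Perm (Fin n)) (ε : Fin n → ℝ),
        (∀ b : Fin n, ε b = 1 ∨ ε b = -1) ∧
        ∀ a b : Fin n, Ψ a b = if a = σ b then ε b else 0) := by
  have hΨ' : Ψᵀ * Ψ = 1 := mul_eq_one_comm.mp hΨ
  have hrow : ∀ a b : Fin n, (∑ c, Ψ a c * Ψ b c) = if a = b then (1:ℝ) else 0 := by
    intro a b
    have := congrFun (congrFun hΨ a) b
    rw [mul_apply] at this
    simpa [transpose_apply, Matrix.one_apply] using this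
  constructor
  · constructor
    · intro h a b hab
      have hh := congrFun (congrFun h a) b
      rcases lt_or_gt_of_ne hab with hlt | hgt
      · simpa [todaM, hlt] using hh
      · simp only [todaM, of_apply, Matrix.zero_apply] at hh
        rw [if_neg (not_lt_of_gt hgt), if_pos hgt] at hh
        linarith
    · intro h
      ext a b
      by_cases hab : a = b
      · simp [todaM, hab]
      · simp [todaM, h hab]
  · constructor
    · intro hdiag
      -- key relation: D * Ψ = Ψ * Λ entrywise
      have hcomm : (Ψ * Λ * Ψᵀ) * Ψ = Ψ * Λ := by
        rw [mul_assoc, hΨ', mul_one]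
      have key : ∀ a b : Fin n, (Ψ * Λ * Ψᵀ) a a * Ψ a b = Ψ a b * Λ b b := by
        intro a b
        have h1 := congrFun (congrFun hcomm a) b
        rw [mul_apply, mul_apply] at h1
        rw [Finset.sum_eq_single a (fun c _ hc => by rw [hdiag (Ne.symm hc)]; ring)
          (by simp)] at h1
        rw [Finset.sum_eq_single b (fun c _ hc => by rw [hΛ hc]; ring) (by simp)] at h1
        exact h1
      -- each row has a unique nonzero entry
      have hexists : ∀ a : Fin n, ∃ b, Ψ a b ≠ 0 := by
        intro a
        by_contra hall
        push_neg at hall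
        have := hrow a a
        simp [hall] at this
      have huniq : ∀ a b b' : Fin n, Ψ a b ≠ 0 → Ψ a b' ≠ 0 → b = b' := by
        intro a b b' hb hb'
        by_contra hne
        have h1 := key a b
        have h2 := key a b'
        have e1 : (Ψ * Λ * Ψᵀ) a a = Λ b b := by
          rw [mul_comm (Ψ a b)] at h1
          exact mul_right_cancel₀ hb h1
        have e2 : (Ψ * Λ * Ψᵀ) a a = Λ b' b' := by
          rw [mul_comm (Ψ a b')] at h2
          exact mul_right_cancel₀ hb' h2
        exact hdist b b' hne (e1 ▸ e2)
      choose f hf using hexists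
      have hzero : ∀ a b : Fin n, b ≠ f a → Ψ a b = 0 := by
        intro a b hb
        by_contra h
        exact hb (huniq a b (f a) h (hf a))
      have hfinj : Function.Injective f := by
        intro a a' hff
        by_contra hne
        have := hrow a a'
        rw [if_neg hne] at this
        rw [Finset.sum_eq_single (f a)
          (fun c _ hc => by rw [hzero a c hc]; ring) (by simp)] at this
        rw [hff] at this
        exact mul_ne_zero (hff ▸ hf a) (hf a') this
      have hfbij : Function.Bijective f := (Finite.injective_iff_bijective).mp hfinj
      let e := Equiv.ofBijective f hfbij
      refine ⟨e.symm, fun b => Ψ (e.symm b) b, ?_, ?_⟩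
      · intro b
        have hb : f (e.symm b) = b := e.apply_symm_apply b
        have := hrow (e.symm b) (e.symm b)
        rw [if_pos rfl] at this
        rw [Finset.sum_eq_single (f (e.symm b))
          (fun c _ hc => by rw [hzero _ c hc]; ring) (by simp)] at this
        rw [hb] at this
        exact mul_self_eq_one_iff.mp this
      · intro a b
        by_cases hab : a = e.symm b
        · rw [if_pos hab, hab]
        · rw [if_neg hab]
          apply hzero
          intro hbf
          apply hab
          have : e a = b := by rw [hbf]; rfl
          rw [← this, Equiv.symm_apply_apply]
    · rintro ⟨σ, ε, hε, hform⟩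
      intro a b hab
      rw [entry_formula Λ hΛ Ψ a b]
      apply Finset.sum_eq_zero
      intro c _
      by_cases ha : a = σ c
      · have hb : b ≠ σ c := fun h => hab (ha.trans h.symm)
        rw [hform b c, if_neg hb]
        ring
      · rw [hform a c, if_neg ha]
        ring
end

section
/- Fix n, let L be a symmetric real n×n matrix and N a diagonal real n×n matrix with diagonal entries n_1, …, n_n. Then the trace of ⁅L, M(L)⁆·N is given by Tr(⁅L, M(L)⁆·N) = 2·Σ_{m<k} (n_k − n_m)·(L_{mk})², where the sum runs over all pairs of indices m < k. -/
open Matrix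

private lemma sum_split_aux {n : ℕ} (a : Fin n) (f : Fin n → ℝ) :
    ∑ b, f b = (∑ b ∈ Finset.Iio a, f b) + f a + ∑ b ∈ Finset.Ioi a, f b := by
  have huniv : (Finset.univ : Finset (Fin n)) =
      (Finset.Iio a ∪ Finset.Ioi a) ∪ {a} := by
    ext b
    simp only [Finset.mem_univ, Finset.mem_union, Finset.mem_Iio, Finset.mem_Ioi,
      Finset.mem_singleton, true_iff]
    rcases lt_trichotomy b a with h | h | h
    · exact Or.inl (Or.inl h)
    · exact Or.inr h
    · exact Or.inl (Or.inr h)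
  rw [huniv, Finset.sum_union, Finset.sum_union, Finset.sum_singleton]
  · ring
  · exact (Finset.disjoint_Ioi_Iio a).symm
  · rw [Finset.disjoint_singleton_right]
    simp

private lemma sum_Iio_comm {n : ℕ} (g : Fin n → Fin n → ℝ) :
    ∑ a, ∑ b ∈ Finset.Iio a, g a b = ∑ b, ∑ a ∈ Finset.Ioi b, g a b :=
  Finset.sum_comm' (fun x y => by simp)

/-- For a symmetric matrix `L` and a diagonal matrix `N`,
`Tr(⁅L, M(L)⁆ N) = 2 ∑_{m<k} (n_k - n_m) (L_{mk})²`. -/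
theorem trace_lie_todaM_mul_diagonal {n : ℕ}
    (L : Matrix (Fin n) (Fin n) ℝ) (hL : Lᵀ = L)
    (N : Matrix (Fin n) (Fin n) ℝ) (hN : N.IsDiag) :
    Matrix.trace (⁅L, todaM L⁆ * N) =
      2 * ∑ m : Fin n, ∑ k ∈ Finset.Ioi m, (N k k - N m m) * (L m k) ^ 2 := by
  classical
  have hLs : ∀ a b, L b a = L a b := fun a b => congrFun (congrFun hL a) b
  set M : Matrix (Fin n) (Fin n) ℝ := todaM L with hMdef
  have hMval : ∀ a b, M a b = if a < b then L a b else if b < a then -L a b else 0 :=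
    fun a b => rfl
  have h1 : Matrix.trace (⁅L, M⁆ * N) = ∑ a, (⁅L, M⁆) a a * N a a := by
    rw [Matrix.trace]
    refine Finset.sum_congr rfl fun a _ => ?_
    rw [Matrix.diag_apply, Matrix.mul_apply]
    exact Finset.sum_eq_single a (fun b _ hb => by rw [hN hb, mul_zero]) (by simp)
  have h2 : ∀ a, (⁅L, M⁆) a a = ∑ b, (L a b * M b a - M a b * L b a) := by
    intro a
    rw [Ring.lie_def, Matrix.sub_apply, Matrix.mul_apply, Matrix.mul_apply,
      ← Finset.sum_sub_distrib]
  rw [h1]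
  simp only [h2, Finset.sum_mul]
  have h3 : ∀ a, ∑ b, (L a b * M b a - M a b * L b a) * N a a =
      (∑ b ∈ Finset.Iio a, 2 * L a b ^ 2 * N a a) +
      ∑ b ∈ Finset.Ioi a, (-2) * L a b ^ 2 * N a a := by
    intro a
    rw [sum_split_aux a]
    have hmid : (L a a * M a a - M a a * L a a) * N a a = 0 := by ring
    rw [hmid, add_zero]
    congr 1
    · refine Finset.sum_congr rfl fun b hb => ?_
      rw [Finset.mem_Iio] at hb
      simp only [hMval, if_pos hb, if_neg (asymm hb), hLs a b]
      ring
    · refine Finset.sum_congr rfl fun b hb => ?_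
      rw [Finset.mem_Ioi] at hb
      simp only [hMval, if_pos hb, if_neg (asymm hb), hLs a b]
      ring
  simp only [h3]
  rw [Finset.sum_add_distrib, sum_Iio_comm (fun a b => 2 * L a b ^ 2 * N a a)]
  rw [Finset.mul_sum]
  rw [← Finset.sum_add_distrib]
  refine Finset.sum_congr rfl fun m _ => ?_
  rw [Finset.mul_sum, ← Finset.sum_add_distrib]
  refine Finset.sum_congr rfl fun k hk => ?_
  rw [hLs k m]
  ring
end

section
/- Fix n, let N be a diagonal real n×n matrix whose diagonal entries are strictly decreasing (n_1 > n_2 > … > n_n), and suppose L : ℝ → Matrix n n ℝ is differentiable, takes symmetric values, and satisfies the full symmetric Toda equation L'(t) = ⁅L(t), M(L(t))⁆ for all t. Then the function t ↦ Tr(L(t)·N) is monotone nonincreasing on ℝ. (The function F(Ψ) = Tr(Ad_Ψ(Λ)·N) is a Lyapunov function for the Toda flow; the flow is gradient with respect to a suitable metric.) -/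
open Matrix

lemma trace_mul_diag {n : ℕ} (X N : Matrix (Fin n) (Fin n) ℝ) (hN : N.IsDiag) :
    Matrix.trace (X * N) = ∑ a, X a a * N a a := by
  rw [Matrix.trace]
  apply Finset.sum_congr rfl
  intro a _
  rw [Matrix.diag_apply, Matrix.mul_apply]
  rw [Finset.sum_eq_single a]
  · intro b _ hb
    rw [hN hb, mul_zero]
  · simp

lemma toda_key {n : ℕ} (N : Matrix (Fin n) (Fin n) ℝ) (hN : N.IsDiag)
    (hdec : ∀ a b : Fin n, a < b → N b b < N a a)
    (A : Matrix (Fin n) (Fin n) ℝ) (hA : Aᵀ = A) :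
    Matrix.trace (⁅A, todaM A⁆ * N) ≤ 0 := by
  have hAsym : ∀ a b : Fin n, A b a = A a b := fun a b => by
    simpa using congrFun (congrFun hA a) b
  set f : Fin n → Fin n → ℝ :=
    fun a k => A a k * (todaM A k a - todaM A a k) * N a a with hf
  have hS : Matrix.trace (⁅A, todaM A⁆ * N) = ∑ a, ∑ k, f a k := by
    rw [trace_mul_diag _ _ hN]
    apply Finset.sum_congr rfl
    intro a _
    rw [Ring.lie_def, Matrix.sub_apply, Matrix.mul_apply, Matrix.mul_apply,
      ← Finset.sum_sub_distrib, Finset.sum_mul]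
    apply Finset.sum_congr rfl
    intro k _
    rw [hf]
    dsimp only
    rw [hAsym a k]
    ring
  rw [hS]
  have h2 : (2 : ℝ) * (∑ a, ∑ k, f a k) = ∑ a, ∑ k, (f a k + f k a) := by
    have hc : (∑ a, ∑ k, f a k) = ∑ a, ∑ k, f k a := Finset.sum_comm
    simp only [Finset.sum_add_distrib]
    rw [two_mul]
    nth_rewrite 2 [hc]
    rfl
  have hpair : ∀ a k : Fin n, f a k + f k a ≤ 0 := by
    intro a k
    rcases lt_trichotomy a k with h | h | h
    · have h1 : todaM A k a - todaM A a k = -(2 * A a k) := by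
        simp only [todaM, Matrix.of_apply, if_neg (asymm h), if_pos h, hAsym a k]
        ring
      have h2' : todaM A a k - todaM A k a = 2 * A a k := by
        simp only [todaM, Matrix.of_apply, if_neg (asymm h), if_pos h, hAsym a k]
        ring
      rw [hf]
      dsimp only
      rw [h1, h2', hAsym a k]
      have := hdec a k h
      nlinarith [sq_nonneg (A a k)]
    · subst h; simp [hf]
    · have h1 : todaM A k a - todaM A a k = 2 * A a k := by
        simp only [todaM, Matrix.of_apply, if_neg (asymm h), if_pos h, hAsym a k]
        ring
      have h2' : todaM A a k - todaM A k a = -(2 * A a k) := by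
        simp only [todaM, Matrix.of_apply, if_neg (asymm h), if_pos h, hAsym a k]
        ring
      rw [hf]
      dsimp only
      rw [h1, h2', hAsym a k]
      have := hdec k a h
      nlinarith [sq_nonneg (A a k)]
  have hsum : ∑ a, ∑ k, (f a k + f k a) ≤ 0 := by
    apply Finset.sum_nonpos
    intro a _
    exact Finset.sum_nonpos fun k _ => hpair a k
  linarith [h2 ▸ hsum]

/-- If `N` is diagonal with strictly decreasing diagonal entries and `L` is a symmetric
solution of the full symmetric Toda equation `L' = ⁅L, M(L)⁆`, then `t ↦ Tr(L(t) N)` is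
monotone nonincreasing (it is a Lyapunov function for the Toda flow). -/
theorem toda_lyapunov_antitone {n : ℕ}
    (N : Matrix (Fin n) (Fin n) ℝ) (hN : N.IsDiag)
    (hdec : ∀ a b : Fin n, a < b → N b b < N a a)
    (L : ℝ → Matrix (Fin n) (Fin n) ℝ)
    (hdiff : ∀ a b : Fin n, Differentiable ℝ fun t => L t a b)
    (hsym : ∀ t : ℝ, (L t)ᵀ = L t)
    (hode : ∀ t : ℝ, matDeriv L t = ⁅L t, todaM (L t)⁆) :
    Antitone fun t : ℝ => Matrix.trace (L t * N) := by
  have hφeq : (fun t : ℝ => Matrix.trace (L t * N)) =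
      fun t => ∑ a, ∑ k, L t a k * N k a := by
    funext t
    rw [Matrix.trace]
    apply Finset.sum_congr rfl
    intro a _
    rw [Matrix.diag_apply, Matrix.mul_apply]
  have hD : ∀ t : ℝ, HasDerivAt (fun t : ℝ => Matrix.trace (L t * N))
      (Matrix.trace (matDeriv L t * N)) t := by
    intro t
    have htr : Matrix.trace (matDeriv L t * N) =
        ∑ a, ∑ k, deriv (fun s => L s a k) t * N k a := by
      rw [Matrix.trace]
      apply Finset.sum_congr rfl
      intro a _
      rw [Matrix.diag_apply, Matrix.mul_apply]
      rfl
    rw [hφeq, htr]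
    apply HasDerivAt.fun_sum
    intro a _
    apply HasDerivAt.fun_sum
    intro k _
    exact ((hdiff a k t).hasDerivAt).mul_const (N k a)
  apply antitone_of_deriv_nonpos
  · intro t
    exact (hD t).differentiableAt
  · intro t
    rw [(hD t).deriv, hode t]
    exact toda_key N hN hdec (L t) (hsym t)
end
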